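/- arXiv:1910.03330 — 5 statements merged into one kernel-verified Lean document; each statement's English description precedes it below -/
import Mathlib

section
/- Let A be a nontrivial complex unital Banach algebra (a complete normed ring with a normed ℂ-algebra structure). For X ∈ A let ad X : A → A be the bounded linear operator Y ↦ X*Y − Y*X. Then the spectrum of ad X (as an element of the Banach algebra of continuous linear endomorphisms of A) is contained in the difference set {z − w : z ∈ spectrum ℂ X, w ∈ spectrum ℂ X}. In particular, if spectrum ℂ X is contained in the open ball of radius π about 0, then spectrum ℂ (ad X) is contained in the open ball of radius 2π about 0; and if spectrum ℂ X ⊆ {z : |Re z| < π}, then spectrum ℂ (ad X) ⊆ {z : |Re z| < 2π}. -/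
open scoped Classical BigOperators

noncomputable section

/-- For commuting elements of a complex Banach algebra, the spectrum of the difference is
contained in the difference set of the spectra. -/
theorem spectrum_sub_subset_of_commute {A : Type*} [NormedRing A] [NormedAlgebra ℂ A]
    [CompleteSpace A] [Nontrivial A] {a b : A} (hab : Commute a b) :
    spectrum ℂ (a - b) ⊆ {u : ℂ | ∃ z ∈ spectrum ℂ a, ∃ w ∈ spectrum ℂ b, u = z - w} := by
  set C1 : Subalgebra ℂ A := Subalgebra.centralizer ℂ ({a, b} : Set A) with hC1
  set B : Subalgebra ℂ A := Subalgebra.centralizer ℂ (C1 : Set A) with hB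
  have haC1 : a ∈ C1 := (Subalgebra.mem_centralizer_iff ℂ).mpr <| by
    rintro g (rfl | rfl) <;> [rfl; exact hab.symm]
  have hbC1 : b ∈ C1 := (Subalgebra.mem_centralizer_iff ℂ).mpr <| by
    rintro g (rfl | rfl) <;> [exact hab; rfl]
  have haB : a ∈ B := (Subalgebra.mem_centralizer_iff ℂ).mpr fun g hg =>
    ((Subalgebra.mem_centralizer_iff ℂ).mp hg a (by simp)).symm
  have hbB : b ∈ B := (Subalgebra.mem_centralizer_iff ℂ).mpr fun g hg =>
    ((Subalgebra.mem_centralizer_iff ℂ).mp hg b (by simp)).symm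
  have hBC1 : (B : Set A) ⊆ (C1 : Set A) := fun x hx =>
    (Subalgebra.mem_centralizer_iff ℂ).mpr <| by
      rintro g (h | h) <;> rw [show g = _ from h]
      · exact (Subalgebra.mem_centralizer_iff ℂ).mp hx a haC1
      · exact (Subalgebra.mem_centralizer_iff ℂ).mp hx b hbC1
  have hBclosed : IsClosed (B : Set A) := by
    have : (B : Set A) = ⋂ g ∈ (C1 : Set A), {x | g * x = x * g} := by
      ext x
      simp only [Set.mem_iInter, Set.mem_setOf_eq, SetLike.mem_coe]
      exact Subalgebra.mem_centralizer_iff ℂ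
    rw [this]
    exact isClosed_biInter fun g _ =>
      isClosed_eq (continuous_const.mul continuous_id) (continuous_id.mul continuous_const)
  letI : CompleteSpace B := hBclosed.completeSpace_coe
  letI : NormedCommRing B :=
    { (inferInstance : NormedRing B) with
      mul_comm := fun x y => Subtype.ext <|
        ((Subalgebra.mem_centralizer_iff ℂ).mp x.2 y.1 (hBC1 y.2)).symm }
  -- key: character values lie in the full spectrum
  have key : ∀ (x : B) (f : WeakDual.characterSpace ℂ B), (f x : ℂ) ∈ spectrum ℂ (x : A) := by
    intro x f
    rw [spectrum.mem_iff]
    intro hunit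
    set d : B := algebraMap ℂ B (f x) - x with hd
    have hdval : (d : A) = algebraMap ℂ A (f x) - (x : A) := rfl
    obtain ⟨u, hu⟩ := hunit
    have hv1 : (d : A) * ↑u⁻¹ = 1 := by rw [hdval, ← hu]; exact u.mul_inv
    have hv2 : (↑u⁻¹ : A) * (d : A) = 1 := by rw [hdval, ← hu]; exact u.inv_mul
    have hvB : (↑u⁻¹ : A) ∈ B := by
      apply (Subalgebra.mem_centralizer_iff ℂ).mpr
      intro g hg
      have hgd : g * (d : A) = (d : A) * g := (Subalgebra.mem_centralizer_iff ℂ).mp d.2 g hg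
      calc g * ↑u⁻¹ = (↑u⁻¹ * (d : A)) * (g * ↑u⁻¹) := by rw [hv2, one_mul]
        _ = ↑u⁻¹ * ((d : A) * g) * ↑u⁻¹ := by noncomm_ring
        _ = ↑u⁻¹ * (g * (d : A)) * ↑u⁻¹ := by rw [hgd]
        _ = (↑u⁻¹ * g) * ((d : A) * ↑u⁻¹) := by noncomm_ring
        _ = ↑u⁻¹ * g := by rw [hv1, mul_one]
    have hdu : IsUnit d := by
      refine ⟨⟨d, ⟨↑u⁻¹, hvB⟩, ?_, ?_⟩, rfl⟩
      · exact Subtype.ext hv1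
      · exact Subtype.ext hv2
    have := hdu.map f
    simp only [hd, map_sub, AlgHomClass.commutes, Algebra.algebraMap_self, RingHom.id_apply, sub_self] at this
    exact not_isUnit_zero this
  intro u hu
  have hu' : u ∈ spectrum ℂ ((⟨a, haB⟩ : B) - ⟨b, hbB⟩) := by
    have := AlgHom.spectrum_apply_subset B.val ((⟨a, haB⟩ : B) - ⟨b, hbB⟩)
    exact Set.notMem_compl_iff.mp fun h => h (this (by exact hu))
  obtain ⟨f, hf⟩ := WeakDual.CharacterSpace.mem_spectrum_iff_exists.mp hu'
  exact ⟨f ⟨a, haB⟩, key _ f, f ⟨b, hbB⟩, key _ f, by rw [← hf, map_sub]⟩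

/-- `ad X : A →L[ℂ] A`, `Y ↦ X*Y − Y*X`. -/
def adL (A : Type*) [NormedRing A] [NormedAlgebra ℂ A] (X : A) : A →L[ℂ] A :=
  ContinuousLinearMap.mul ℂ A X - (ContinuousLinearMap.mul ℂ A).flip X

/-- The spectrum of `ad X` is contained in the difference set of the spectrum of `X`;
in particular the two ball/strip inclusions hold. -/
theorem spectrum_adL_subset (A : Type*) [NormedRing A] [NormedAlgebra ℂ A]
    [CompleteSpace A] [Nontrivial A] (X : A) :
    spectrum ℂ (adL A X) ⊆
      {u : ℂ | ∃ z ∈ spectrum ℂ X, ∃ w ∈ spectrum ℂ X, u = z - w} ∧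
    (spectrum ℂ X ⊆ Metric.ball (0 : ℂ) Real.pi →
      spectrum ℂ (adL A X) ⊆ Metric.ball (0 : ℂ) (2 * Real.pi)) ∧
    (spectrum ℂ X ⊆ {z : ℂ | |z.re| < Real.pi} →
      spectrum ℂ (adL A X) ⊆ {z : ℂ | |z.re| < 2 * Real.pi}) := by
  haveI : Nontrivial (A →L[ℂ] A) :=
    ⟨1, 0, fun h => one_ne_zero (α := A) (by simpa using DFunLike.congr_fun h (1 : A))⟩
  set L := ContinuousLinearMap.mul ℂ A X with hL
  set R := (ContinuousLinearMap.mul ℂ A).flip X with hR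
  have hcomm : Commute L R := by
    ext Y
    simp [hL, hR, ContinuousLinearMap.mul_apply', mul_assoc]
  have hLspec : spectrum ℂ L ⊆ spectrum ℂ X := by
    intro z hz
    by_contra hzX
    rw [spectrum.notMem_iff] at hzX
    obtain ⟨u, hu⟩ := hzX
    have h1 : (algebraMap ℂ A z - X) * ↑u⁻¹ = 1 := by rw [← hu]; exact u.mul_inv
    have h2 : (↑u⁻¹ : A) * (algebraMap ℂ A z - X) = 1 := by rw [← hu]; exact u.inv_mul
    apply spectrum.notMem_iff.mpr _ hz
    refine ⟨⟨algebraMap ℂ (A →L[ℂ] A) z - L, ContinuousLinearMap.mul ℂ A ↑u⁻¹, ?_, ?_⟩, rfl⟩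
    · ext Y
      simp only [ContinuousLinearMap.mul_apply', ContinuousLinearMap.sub_apply,
        ContinuousLinearMap.one_apply, ContinuousLinearMap.mul_apply,
        Algebra.algebraMap_eq_smul_one, ContinuousLinearMap.smul_apply,
        ContinuousLinearMap.one_apply, hL]
      rw [Algebra.smul_def, ← sub_mul, ← mul_assoc, h1, one_mul]
    · ext Y
      simp only [ContinuousLinearMap.mul_apply', ContinuousLinearMap.sub_apply,
        ContinuousLinearMap.one_apply, ContinuousLinearMap.mul_apply,
        Algebra.algebraMap_eq_smul_one, ContinuousLinearMap.smul_apply,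
        ContinuousLinearMap.one_apply, hL]
      rw [Algebra.smul_def, ← sub_mul, ← mul_assoc, h2, one_mul]
  have hRspec : spectrum ℂ R ⊆ spectrum ℂ X := by
    intro z hz
    by_contra hzX
    rw [spectrum.notMem_iff] at hzX
    obtain ⟨u, hu⟩ := hzX
    have h1 : (algebraMap ℂ A z - X) * ↑u⁻¹ = 1 := by rw [← hu]; exact u.mul_inv
    have h2 : (↑u⁻¹ : A) * (algebraMap ℂ A z - X) = 1 := by rw [← hu]; exact u.inv_mul
    apply spectrum.notMem_iff.mpr _ hz
    refine ⟨⟨algebraMap ℂ (A →L[ℂ] A) z - R,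
      (ContinuousLinearMap.mul ℂ A).flip ↑u⁻¹, ?_, ?_⟩, rfl⟩
    · ext Y
      simp only [ContinuousLinearMap.mul_apply', ContinuousLinearMap.sub_apply,
        ContinuousLinearMap.flip_apply, ContinuousLinearMap.mul_apply,
        Algebra.algebraMap_eq_smul_one, ContinuousLinearMap.smul_apply,
        ContinuousLinearMap.one_apply, hR]
      have : z • (Y * ↑u⁻¹) - Y * ↑u⁻¹ * X = (Y * ↑u⁻¹) * (algebraMap ℂ A z - X) := by
        rw [mul_sub, ← Algebra.commutes z (Y * (↑u⁻¹ : A)), ← Algebra.smul_def]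
      rw [this, mul_assoc, h2, mul_one]
    · ext Y
      simp only [ContinuousLinearMap.mul_apply', ContinuousLinearMap.sub_apply,
        ContinuousLinearMap.flip_apply, ContinuousLinearMap.mul_apply,
        Algebra.algebraMap_eq_smul_one, ContinuousLinearMap.smul_apply,
        ContinuousLinearMap.one_apply, hR]
      have : z • Y - Y * X = Y * (algebraMap ℂ A z - X) := by
        rw [mul_sub, ← Algebra.commutes z Y, ← Algebra.smul_def]
      rw [this, mul_assoc, h1, mul_one]
  have main : spectrum ℂ (adL A X) ⊆
      {u : ℂ | ∃ z ∈ spectrum ℂ X, ∃ w ∈ spectrum ℂ X, u = z - w} := by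
    intro u hu
    have hu' : u ∈ spectrum ℂ (L - R) := hu
    obtain ⟨z, hz, w, hw, rfl⟩ := spectrum_sub_subset_of_commute hcomm hu'
    exact ⟨z, hLspec hz, w, hRspec hw, rfl⟩
  refine ⟨main, ?_, ?_⟩
  · intro hX u hu
    obtain ⟨z, hz, w, hw, rfl⟩ := main hu
    have hz' := mem_ball_zero_iff.mp (hX hz)
    have hw' := mem_ball_zero_iff.mp (hX hw)
    rw [mem_ball_zero_iff]
    calc ‖z - w‖ ≤ ‖z‖ + ‖w‖ := norm_sub_le z w
      _ < Real.pi + Real.pi := add_lt_add hz' hw'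
      _ = 2 * Real.pi := by ring
  · intro hX u hu
    obtain ⟨z, hz, w, hw, rfl⟩ := main hu
    have hz' : |z.re| < Real.pi := hX hz
    have hw' : |w.re| < Real.pi := hX hw
    show |(z - w).re| < 2 * Real.pi
    rw [Complex.sub_re]
    calc |z.re - w.re| ≤ |z.re| + |w.re| := abs_sub z.re w.re
      _ < Real.pi + Real.pi := add_lt_add hz' hw'
      _ = 2 * Real.pi := by ring

end
end

section
/- For every k ≥ 1, let φ : FreeAlgebra ℚ (Fin k) → FreeAlgebra ℚ (Fin k) be the unique algebra homomorphism sending the generator X_i to −X_{k+1−i} for each 1 ≤ i ≤ k. Then φ(μ_k(X_1,…,X_k)) = −μ_k(X_1,…,X_k); equivalently, μ_k(X_1,…,X_k) = −μ_k(−X_k,…,−X_1). -/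
/-! Write `ρ` for the reversal `i ↦ n + 1 - i`. The map `X_i ↦ -X_{ρ i}` sends the word
`X_{σ 1} ⋯ X_{σ n}` to `(-1)^n X_{ρσ 1} ⋯ X_{ρσ n}`, and composing with `ρ` exchanges the ascents
and descents of `σ`. Since `des σ + des (ρσ) = n - 1`, the coefficient of `ρσ` in `μ_n` is
`-(-1)^n` times that of `σ`, and reindexing the sum by `σ ↦ ρσ` gives `-μ_n`. -/

open scoped Classical BigOperators

noncomputable section

/-- Number of descents of a permutation of `Fin k`:
`des σ = #{1 ≤ i ≤ k−1 : σ(i) > σ(i+1)}`. -/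
def descents {k : ℕ} (σ : Equiv.Perm (Fin k)) : ℕ :=
  (Finset.univ.filter fun i : Fin k =>
    ∃ h : (i : ℕ) + 1 < k, σ ⟨(i : ℕ) + 1, h⟩ < σ i).card

/-- Number of ascents of a permutation of `Fin k`: `asc σ = (k−1) − des σ`. -/
def ascents {k : ℕ} (σ : Equiv.Perm (Fin k)) : ℕ := (k - 1) - descents σ

/-- The `k`-th Magnus commutator in the free associative algebra
(Mielnik–Plebański formula):
`μ_k(X_1,…,X_k) = Σ_{σ ∈ S_k} (−1)^{des σ} (asc σ)!(des σ)!/k! · X_{σ(1)} ⋯ X_{σ(k)}`. -/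
def magnus (R : Type*) [Field R] (k : ℕ) : FreeAlgebra R (Fin k) :=
  ∑ σ : Equiv.Perm (Fin k),
    ((-1 : R) ^ descents σ * ((ascents σ).factorial : R) * ((descents σ).factorial : R) /
        (k.factorial : R)) •
      (List.ofFn fun i : Fin k => FreeAlgebra.ι R (σ i)).prod

def descentSet {n : ℕ} (σ : Equiv.Perm (Fin n)) : Finset (Fin n) :=
  Finset.univ.filter fun i : Fin n => ∃ h : (i : ℕ) + 1 < n, σ ⟨(i : ℕ) + 1, h⟩ < σ i

lemma card_descentSet {n : ℕ} (σ : Equiv.Perm (Fin n)) : (descentSet σ).card = descents σ :=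
  rfl

lemma disjoint_descentSet_revPerm_mul {n : ℕ} (σ : Equiv.Perm (Fin n)) :
    Disjoint (descentSet σ) (descentSet (Fin.revPerm * σ)) := by
  simp only [descentSet, Finset.disjoint_filter, Equiv.Perm.mul_apply, Fin.revPerm_apply,
    Fin.rev_lt_rev]
  rintro i - ⟨_, hlt⟩ ⟨_, hgt⟩
  exact lt_asymm hlt hgt

lemma descentSet_union_descentSet_revPerm_mul {n : ℕ} (σ : Equiv.Perm (Fin n)) :
    descentSet σ ∪ descentSet (Fin.revPerm * σ) =
      Finset.univ.filter fun i : Fin n => i < n - 1 := by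
  ext i
  simp only [descentSet, Finset.mem_union, Finset.mem_filter, Finset.mem_univ, true_and,
    Equiv.Perm.mul_apply, Fin.revPerm_apply, Fin.rev_lt_rev]
  constructor
  · rintro (⟨h, -⟩ | ⟨h, -⟩) <;> omega
  · intro hi
    have h : (i : ℕ) + 1 < n := by omega
    have hne : σ ⟨(i : ℕ) + 1, h⟩ ≠ σ i := fun he => by
      simpa [Fin.ext_iff] using σ.injective he
    exact (lt_or_gt_of_ne hne).imp (⟨h, ·⟩) (⟨h, ·⟩)

lemma descents_add_descents_revPerm_mul {n : ℕ} (σ : Equiv.Perm (Fin n)) :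
    descents σ + descents (Fin.revPerm * σ) = n - 1 := by
  rw [← card_descentSet, ← card_descentSet,
    ← Finset.card_union_of_disjoint (disjoint_descentSet_revPerm_mul σ),
    descentSet_union_descentSet_revPerm_mul, Fin.card_filter_val_lt]
  omega

lemma ascents_revPerm_mul {n : ℕ} (σ : Equiv.Perm (Fin n)) :
    ascents (Fin.revPerm * σ) = descents σ := by
  have := descents_add_descents_revPerm_mul σ
  rw [ascents]
  omega

namespace FreeAlgebra

variable (R : Type*) [CommRing R] {n : ℕ}

def permWord (σ : Equiv.Perm (Fin n)) : FreeAlgebra R (Fin n) :=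
  (List.ofFn fun i : Fin n => ι R (σ i)).prod

lemma lift_neg_rev_permWord (σ : Equiv.Perm (Fin n)) :
    lift R (fun i : Fin n => -ι R i.rev) (permWord R σ) =
      (-1 : R) ^ n • permWord R (Fin.revPerm * σ) := by
  have hneg : (List.ofFn fun i : Fin n => -ι R (σ i).rev) =
      (List.ofFn fun i : Fin n => ι R ((Fin.revPerm * σ : Equiv.Perm (Fin n)) i)).map Neg.neg := by
    rw [List.map_ofFn]
    rfl
  rw [Algebra.smul_def, map_pow, map_neg, map_one]
  simp only [permWord, map_list_prod, List.map_ofFn, Function.comp_def, lift_ι_apply]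
  rw [hneg, List.prod_map_neg, List.length_ofFn]

end FreeAlgebra

section Magnus

variable (R : Type*) [Field R]

def magnusCoeff {n : ℕ} (σ : Equiv.Perm (Fin n)) : R :=
  (-1 : R) ^ descents σ * ((ascents σ).factorial : R) * ((descents σ).factorial : R) /
    (n.factorial : R)

lemma magnus_eq_sum_magnusCoeff_smul_permWord (n : ℕ) :
    magnus R n = ∑ σ : Equiv.Perm (Fin n), magnusCoeff R σ • FreeAlgebra.permWord R σ :=
  rfl

lemma neg_one_pow_mul_magnusCoeff {k : ℕ} (σ : Equiv.Perm (Fin (k + 1))) :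
    (-1 : R) ^ (k + 1) * magnusCoeff R σ = -magnusCoeff R (Fin.revPerm * σ) := by
  have hsum : descents σ + descents (Fin.revPerm * σ) = k := descents_add_descents_revPerm_mul σ
  have hasc : ascents σ = descents (Fin.revPerm * σ) := by rw [ascents]; omega
  have hsign : (-1 : R) ^ (k + 1) * (-1) ^ descents σ = -(-1) ^ descents (Fin.revPerm * σ) := by
    generalize descents σ = a, descents (Fin.revPerm * σ) = b at hsum
    rw [← hsum, ← pow_add, show a + b + 1 + a = b + 2 * a + 1 by ring, pow_succ, pow_add, pow_mul]
    simp
  rw [magnusCoeff, magnusCoeff, ascents_revPerm_mul, hasc]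
  linear_combination
    ((descents (Fin.revPerm * σ)).factorial * (descents σ).factorial / ((k + 1).factorial : R)) *
      hsign

theorem lift_neg_rev_magnus (k : ℕ) :
    FreeAlgebra.lift R (fun i : Fin (k + 1) => -FreeAlgebra.ι R i.rev) (magnus R (k + 1)) =
      -magnus R (k + 1) := by
  rw [magnus_eq_sum_magnusCoeff_smul_permWord, map_sum, ← Finset.sum_neg_distrib]
  refine Fintype.sum_equiv (Equiv.mulLeft Fin.revPerm) _ _ fun σ => ?_
  rw [map_smul, FreeAlgebra.lift_neg_rev_permWord, smul_smul, mul_comm,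
    neg_one_pow_mul_magnusCoeff, neg_smul, Equiv.coe_mulLeft]

end Magnus

/-- `μ_k(X_1,…,X_k) = −μ_k(−X_k,…,−X_1)`: the algebra map `X_i ↦ −X_{k+1−i}` sends
the Magnus commutator to its negative.  Stated for `k+1 ≥ 1` variables. -/
theorem magnus_reverse (k : ℕ) :
    FreeAlgebra.lift ℚ (fun i : Fin (k + 1) => -FreeAlgebra.ι ℚ i.rev)
        (magnus ℚ (k + 1)) =
      -magnus ℚ (k + 1) :=
  lift_neg_rev_magnus ℚ k

end
end

section
/- For every k ≥ 1, in the free associative algebra FreeAlgebra ℚ (Fin (k+1)) with generators X_0, X_1, …, X_k, the element X_0 * μ_k(X_1,…,X_k) − μ_k(X_0,…,X_{k−1}) * X_k lies in the ℚ-submodule spanned by all commutators {a*b − b*a : a, b ∈ FreeAlgebra ℚ (Fin (k+1))}. (Equivalently, Tr X_0 μ_k(X_1,…,X_k) = Tr μ_k(X_0,…,X_{k−1}) X_k for the formal trace onto cyclic words.) -/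
open scoped Classical BigOperators

noncomputable section

/-!
A word in which each of `X_0, …, X_k` occurs once is a permutation `g` of `Fin (k + 1)`, and
modulo commutators it only depends on its rotation class, as does its number of cyclic descents.
The words `X_0 Y_σ` (the `g` with `g 0 = 0`) and the words `Z_σ X_k` (the `g` with `g k = k`) are
two systems of representatives of the rotation classes, and in both cases the word has
`des σ + 1` cyclic descents. So both sides are the same sum over rotation classes, for any
coefficients that, like those of `μ_k`, depend on `σ` only through `des σ`.
-/

open Equiv Finset

section Descents

variable {α : Type*} [LinearOrder α] {n : ℕ}

def linearDescents (f : Fin (n + 1) → α) : ℕ :=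
  #{i : Fin n | f i.succ < f i.castSucc}

/-- `i + 1` wraps around, so the step from `f (last n)` to `f 0` counts as well. -/
def cyclicDescents (f : Fin (n + 1) → α) : ℕ :=
  #{i | f (i + 1) < f i}

theorem descents_eq_linearDescents (σ : Perm (Fin (n + 1))) : descents σ = linearDescents σ := by
  rw [descents, linearDescents, card_filter, card_filter, Fin.sum_univ_castSucc]
  simp
  rfl

theorem linearDescents_comp_strictMono {β : Type*} [LinearOrder β] {φ : α → β}
    (hφ : StrictMono φ) (f : Fin (n + 1) → α) :
    linearDescents (φ ∘ f) = linearDescents f := by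
  simp only [linearDescents, Function.comp_apply, hφ.lt_iff_lt]

theorem linearDescents_cons (a : α) (f : Fin (n + 1) → α) :
    linearDescents (Fin.cons a f : Fin (n + 2) → α) =
      (if f 0 < a then 1 else 0) + linearDescents f := by
  rw [linearDescents, linearDescents, card_filter, card_filter, Fin.sum_univ_succ]
  simp

theorem linearDescents_snoc (f : Fin (n + 1) → α) (b : α) :
    linearDescents (Fin.snoc f b : Fin (n + 2) → α) =
      linearDescents f + if b < f (Fin.last n) then 1 else 0 := by
  rw [linearDescents, linearDescents, card_filter, card_filter, Fin.sum_univ_castSucc]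
  simp only [Fin.snoc_last, Fin.snoc_castSucc, Fin.succ_last, ← Fin.castSucc_succ]

theorem cyclicDescents_eq (f : Fin (n + 1) → α) :
    cyclicDescents f = linearDescents f + if f 0 < f (Fin.last n) then 1 else 0 := by
  rw [cyclicDescents, linearDescents, card_filter, card_filter, Fin.sum_univ_castSucc]
  simp [Fin.coeSucc_eq_succ]

theorem cyclicDescents_comp_finRotate (f : Fin (n + 1) → α) :
    cyclicDescents (f ∘ finRotate (n + 1)) = cyclicDescents f := by
  refine card_equiv (finRotate (n + 1)) fun i => ?_
  simp [finRotate_apply]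

theorem cyclicDescents_cons_of_lt (a : α) (f : Fin (n + 1) → α) (ha : ∀ i, a < f i) :
    cyclicDescents (Fin.cons a f : Fin (n + 2) → α) = linearDescents f + 1 := by
  simp [cyclicDescents_eq, linearDescents_cons, (ha 0).not_gt, ha]

theorem cyclicDescents_snoc_of_lt (f : Fin (n + 1) → α) (b : α) (hb : ∀ i, f i < b) :
    cyclicDescents (Fin.snoc f b : Fin (n + 2) → α) = linearDescents f + 1 := by
  simp [cyclicDescents_eq, linearDescents_snoc, (hb _).not_gt, hb]

end Descents

section Words

variable (R : Type*) [CommSemiring R] {ι κ : Type*}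

def word {n : ℕ} (f : Fin n → ι) : FreeAlgebra R ι :=
  (List.ofFn fun i => FreeAlgebra.ι R (f i)).prod

theorem word_cons {n : ℕ} (a : ι) (f : Fin n → ι) :
    word R (Fin.cons a f : Fin (n + 1) → ι) = FreeAlgebra.ι R a * word R f := by
  simp [word, List.ofFn_succ]

theorem word_snoc {n : ℕ} (f : Fin n → ι) (b : ι) :
    word R (Fin.snoc f b : Fin (n + 1) → ι) = word R f * FreeAlgebra.ι R b := by
  rw [word, List.ofFn_succ', List.prod_concat]
  simp [word]

theorem lift_word {n : ℕ} (e : ι → κ) (f : Fin n → ι) :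
    FreeAlgebra.lift R (fun i => FreeAlgebra.ι R (e i)) (word R f) = word R (e ∘ f) := by
  simp [word, map_list_prod, List.map_ofFn, Function.comp_def]

end Words

section CommutatorSpan

variable (R A : Type*) [CommRing R] [Ring A] [Algebra R A]

def commutatorSpan : Submodule R A :=
  Submodule.span R {x | ∃ a b : A, x = a * b - b * a}

variable {R A}

theorem mk_mul_comm (a b : A) :
    (Submodule.Quotient.mk (a * b) : A ⧸ commutatorSpan R A) = Submodule.Quotient.mk (b * a) :=
  (Submodule.Quotient.eq _).mpr (Submodule.subset_span ⟨a, b, rfl⟩)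

theorem mk_word_comp_finRotate {ι : Type*} {n : ℕ} (f : Fin (n + 1) → ι) :
    (Submodule.Quotient.mk (word R (f ∘ finRotate (n + 1))) :
        FreeAlgebra R ι ⧸ commutatorSpan R (FreeAlgebra R ι)) =
      Submodule.Quotient.mk (word R f) := by
  have h_rotate : f ∘ finRotate (n + 1) = Fin.snoc (Fin.tail f) (f 0) := by
    refine funext fun i => Fin.lastCases ?_ (fun j => ?_) i <;> simp [Fin.tail]
  rw [h_rotate, word_snoc, ← Fin.cons_self_tail f, word_cons, Fin.tail_cons, Fin.cons_zero]
  exact mk_mul_comm _ _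

end CommutatorSpan

section RotationClasses

variable {M : Type*} [AddCommMonoid M] {n : ℕ}

theorem finCycle_eq_finRotate_pow (k : Fin n) : finCycle k = finRotate n ^ k.val :=
  DFunLike.coe_injective <| by rw [Perm.coe_pow]; exact finCycle_eq_finRotate_iterate

/-- Every rotation class of `Perm (Fin (n + 1))` meets `{g | g p = v}` exactly once. -/
theorem sum_perm_eq_card_nsmul_sum_apply_eq (Φ : Perm (Fin (n + 1)) → M)
    (hΦ : ∀ g, Φ (g * finRotate (n + 1)) = Φ g) (p v : Fin (n + 1)) :
    ∑ g, Φ g = (n + 1) • ∑ g with g p = v, Φ g := by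
  have hΦ_cycle (k : Fin (n + 1)) (g) : Φ (g * finCycle k) = Φ g := by
    rw [finCycle_eq_finRotate_pow]
    induction k.val generalizing g with
    | zero => simp
    | succ t ih => rw [pow_succ', ← mul_assoc, ih, hΦ]
  have h_fiber (w : Fin (n + 1)) : ∑ g with g w = v, Φ g = ∑ g with g p = v, Φ g := by
    refine sum_equiv (Equiv.mulRight (finCycle (w - p))) (fun g => ?_)
      (fun g _ => (hΦ_cycle _ g).symm)
    simp
  calc ∑ g, Φ g = ∑ w, ∑ g with g.symm v = w, Φ g := by rw [sum_fiberwise]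
    _ = ∑ w : Fin (n + 1), ∑ g with g p = v, Φ g := by
      simp_rw [symm_apply_eq, eq_comm (a := v), h_fiber]
    _ = (n + 1) • ∑ g with g p = v, Φ g := by simp

theorem sum_apply_eq_eq_sum_apply_eq [IsAddTorsionFree M] (Φ : Perm (Fin (n + 1)) → M)
    (hΦ : ∀ g, Φ (g * finRotate (n + 1)) = Φ g) (p v p' v' : Fin (n + 1)) :
    ∑ g with g p = v, Φ g = ∑ g with g p' = v', Φ g := by
  rw [← nsmul_right_inj n.add_one_ne_zero, ← sum_perm_eq_card_nsmul_sum_apply_eq Φ hΦ,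
    ← sum_perm_eq_card_nsmul_sum_apply_eq Φ hΦ]

theorem sum_perm_apply_eq_eq_sum_permCongr_optionCongr {α β : Type*} [Fintype α] [DecidableEq α]
    [Fintype β] [DecidableEq β] (e : Option β ≃ α) (a : α) (ha : e none = a)
    (Φ : Perm α → M) :
    ∑ g with g a = a, Φ g = ∑ σ : Perm β, Φ (e.permCongr σ.optionCongr) := by
  subst ha
  rw [sum_filter, ← (Perm.decomposeOption.symm.trans e.permCongr).sum_comp, Fintype.sum_prod_type]
  simp [permCongr_apply, pull_end]

end RotationClasses

section DescentSums

variable (R : Type*) [CommRing R] {ι : Type*} {k : ℕ}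

def descentSum (w : ℕ → R) (k : ℕ) : FreeAlgebra R (Fin k) :=
  ∑ σ : Perm (Fin k), w (descents σ) • word R σ

theorem ι_mul_lift_descentSum (w : ℕ → R) (a : ι) (e : Fin k → ι) :
    FreeAlgebra.ι R a * FreeAlgebra.lift R (fun i => FreeAlgebra.ι R (e i)) (descentSum R w k) =
      ∑ σ : Perm (Fin k),
        w (descents σ) • word R (Fin.cons a (e ∘ σ) : Fin (k + 1) → ι) := by
  simp only [descentSum, map_sum, map_smul, lift_word, mul_sum, mul_smul_comm, word_cons]

theorem lift_descentSum_mul_ι (w : ℕ → R) (e : Fin k → ι) (b : ι) :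
    FreeAlgebra.lift R (fun i => FreeAlgebra.ι R (e i)) (descentSum R w k) * FreeAlgebra.ι R b =
      ∑ σ : Perm (Fin k),
        w (descents σ) • word R (Fin.snoc (e ∘ σ) b : Fin (k + 1) → ι) := by
  simp only [descentSum, map_sum, map_smul, lift_word, sum_mul, smul_mul_assoc, word_snoc]

end DescentSums

theorem coe_permCongr_finSuccEquiv_symm {n : ℕ} (σ : Perm (Fin n)) :
    ⇑((finSuccEquiv n).symm.permCongr σ.optionCongr) = Fin.cons 0 (Fin.succ ∘ σ) := by
  funext i
  cases i using Fin.cases <;> simp [permCongr_apply]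

theorem coe_permCongr_finSuccEquivLast_symm {n : ℕ} (σ : Perm (Fin n)) :
    ⇑(finSuccEquivLast.symm.permCongr σ.optionCongr) =
      Fin.snoc (Fin.castSucc ∘ σ) (Fin.last n) := by
  funext i
  cases i using Fin.lastCases <;> simp [permCongr_apply]

theorem cyclicDescents_cons_zero_comp_succ {n : ℕ} (σ : Perm (Fin (n + 1))) :
    cyclicDescents (Fin.cons 0 (Fin.succ ∘ σ) : Fin (n + 2) → Fin (n + 2)) =
      descents σ + 1 := by
  rw [cyclicDescents_cons_of_lt 0 (Fin.succ ∘ σ) fun i => Fin.succ_pos (σ i),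
    linearDescents_comp_strictMono (Fin.strictMono_succ), descents_eq_linearDescents]

theorem cyclicDescents_snoc_comp_castSucc_last {n : ℕ} (σ : Perm (Fin (n + 1))) :
    cyclicDescents (Fin.snoc (Fin.castSucc ∘ σ) (Fin.last _) : Fin (n + 2) → Fin (n + 2)) =
      descents σ + 1 := by
  rw [cyclicDescents_snoc_of_lt (Fin.castSucc ∘ σ) _ fun i => Fin.castSucc_lt_last (σ i),
    linearDescents_comp_strictMono (Fin.strictMono_castSucc), descents_eq_linearDescents]

theorem mk_ι_zero_mul_lift_descentSum (R : Type*) [Field R] [CharZero R] (w : ℕ → R)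
    (m : ℕ) :
    (Submodule.Quotient.mk (FreeAlgebra.ι R 0 *
        FreeAlgebra.lift R (fun i => FreeAlgebra.ι R i.succ) (descentSum R w (m + 1))) :
        FreeAlgebra R (Fin (m + 2)) ⧸ commutatorSpan R (FreeAlgebra R (Fin (m + 2)))) =
      Submodule.Quotient.mk (FreeAlgebra.lift R (fun i => FreeAlgebra.ι R i.castSucc)
        (descentSum R w (m + 1)) * FreeAlgebra.ι R (Fin.last (m + 1))) := by
  have : IsAddTorsionFree
      (FreeAlgebra R (Fin (m + 2)) ⧸ commutatorSpan R (FreeAlgebra R (Fin (m + 2)))) :=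
    .of_isTorsionFree R _
  set Φ : Perm (Fin (m + 2)) →
      FreeAlgebra R (Fin (m + 2)) ⧸ commutatorSpan R (FreeAlgebra R (Fin (m + 2))) :=
    fun g => w (cyclicDescents g - 1) • Submodule.Quotient.mk (word R g)
  have hΦ (g : Perm (Fin (m + 2))) : Φ (g * finRotate (m + 2)) = Φ g := by
    simp only [Φ, Perm.coe_mul, cyclicDescents_comp_finRotate, mk_word_comp_finRotate]
  have h_cons (σ : Perm (Fin (m + 1))) :
      Submodule.Quotient.mk (w (descents σ) • word R (Fin.cons 0 (Fin.succ ∘ σ))) =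
        Φ ((finSuccEquiv (m + 1)).symm.permCongr σ.optionCongr) := by
    simp only [Φ, Submodule.Quotient.mk_smul, coe_permCongr_finSuccEquiv_symm,
      cyclicDescents_cons_zero_comp_succ, Nat.add_sub_cancel]
  have h_snoc (σ : Perm (Fin (m + 1))) :
      Submodule.Quotient.mk
          (w (descents σ) • word R (Fin.snoc (Fin.castSucc ∘ σ) (Fin.last _))) =
        Φ (finSuccEquivLast.symm.permCongr σ.optionCongr) := by
    simp only [Φ, Submodule.Quotient.mk_smul, coe_permCongr_finSuccEquivLast_symm,
      cyclicDescents_snoc_comp_castSucc_last, Nat.add_sub_cancel]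
  calc _ = ∑ σ : Perm (Fin (m + 1)),
        Φ ((finSuccEquiv (m + 1)).symm.permCongr σ.optionCongr) := by
        rw [ι_mul_lift_descentSum, ← Submodule.mkQ_apply, map_sum]
        exact sum_congr rfl fun σ _ => h_cons σ
    _ = ∑ g with g 0 = 0, Φ g :=
        (sum_perm_apply_eq_eq_sum_permCongr_optionCongr _ _ finSuccEquiv_symm_none Φ).symm
    _ = ∑ g with g (Fin.last _) = Fin.last _, Φ g := sum_apply_eq_eq_sum_apply_eq Φ hΦ _ _ _ _
    _ = ∑ σ : Perm (Fin (m + 1)), Φ (finSuccEquivLast.symm.permCongr σ.optionCongr) :=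
        sum_perm_apply_eq_eq_sum_permCongr_optionCongr _ _ finSuccEquivLast_symm_none Φ
    _ = _ := by
        rw [lift_descentSum_mul_ι, ← Submodule.mkQ_apply, map_sum]
        exact sum_congr rfl fun σ _ => (h_snoc σ).symm

def magnusWeight (R : Type*) [Field R] (k d : ℕ) : R :=
  (-1) ^ d * ((k - 1 - d).factorial : R) * (d.factorial : R) / (k.factorial : R)

theorem magnus_eq_descentSum (R : Type*) [Field R] (k : ℕ) :
    magnus R k = descentSum R (magnusWeight R k) k :=
  rfl

/-- Cyclic trace symmetry of the Magnus commutators: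
`X_0·μ_k(X_1,…,X_k) − μ_k(X_0,…,X_{k−1})·X_k` is a linear combination of commutators. -/
theorem magnus_trace_cyclic (k : ℕ) (hk : 1 ≤ k) :
    FreeAlgebra.ι ℚ (0 : Fin (k + 1)) *
        FreeAlgebra.lift ℚ (fun i : Fin k => FreeAlgebra.ι ℚ i.succ) (magnus ℚ k) -
      FreeAlgebra.lift ℚ (fun i : Fin k => FreeAlgebra.ι ℚ i.castSucc) (magnus ℚ k) *
        FreeAlgebra.ι ℚ (Fin.last k) ∈
      Submodule.span ℚ
        {x : FreeAlgebra ℚ (Fin (k + 1)) |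
          ∃ a b : FreeAlgebra ℚ (Fin (k + 1)), x = a * b - b * a} := by
  obtain ⟨m, rfl⟩ : ∃ m, k = m + 1 := ⟨k - 1, by omega⟩
  rw [magnus_eq_descentSum]
  exact (Submodule.Quotient.eq _).mp
    (mk_ι_zero_mul_lift_descentSum ℚ (magnusWeight ℚ (m + 1)) m)

end
end

section
/- In FreeLieAlgebra ℝ (Fin 4), the ℓ¹ Lie norm of the fourth Lie Magnus commutator equals 1/3: ‖μ_4^Lie(X_1,X_2,X_3,X_4)‖ = 1/3. Equivalently, Θ_4^Lie = (1/4!)·(1/3). -/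
/-!
Upper bound: expanding the 24-term Dynkin sum and straightening it with the Jacobi identity gives
`μ₄ = (1/12) (⁅X₀,⁅X₁,⁅X₂,X₃⁆⁆⁆ + ⁅⁅X₀,X₁⁆,⁅X₂,X₃⁆⁆ + ⁅⁅X₀,⁅X₁,X₂⁆⁆,X₃⁆ + ⁅⁅X₀,⁅X₁,X₃⁆⁆,X₂⁆)`,
a presentation of weight `1/3`.

Lower bound: map the free Lie algebra into the free associative algebra and pair with the weight
`2·X₀X₁X₂X₃ + X₀X₁X₃X₂ + X₀X₂X₁X₃ + X₁X₀X₂X₃ + X₁X₀X₃X₂` on words. A Lie monomial is homogeneous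
in every letter, so the pairing vanishes unless the monomial is multilinear in `X₀,…,X₃`; such a
monomial is, up to sign, `⁅a,⁅b,⁅c,d⁆⁆⁆` or `⁅⁅a,b⁆,⁅c,d⁆⁆`, and a finite check shows that the
pairing is at most `1` in absolute value on all of them. Each of the four monomials above pairs to
`1`, so the functional is a dual certificate of value `1/3`.
-/

open scoped Classical BigOperators

noncomputable section

/-- Right-nested Lie bracket of a list: `[a₁,…,aₖ] ↦ ⁅a₁, ⁅a₂, ⁅…, aₖ⁆…⁆⁆`. -/
def rightBracket {L : Type*} [LieRing L] : List L → L
  | [] => 0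
  | [a] => a
  | a :: (b :: rest) => ⁅a, rightBracket (b :: rest)⁆

/-- The `k`-th Lie Magnus commutator (Dynkin form):
`μ_k^Lie = Σ_{σ ∈ S_k} (−1)^{des σ} (asc σ)!(des σ)!/(k!·k) ·
  ⁅X_{σ(1)}, ⁅…, ⁅X_{σ(k−1)}, X_{σ(k)}⁆…⁆⁆`. -/
def magnusLie (R : Type*) [Field R] (k : ℕ) : FreeLieAlgebra R (Fin k) :=
  ∑ σ : Equiv.Perm (Fin k),
    ((-1 : R) ^ descents σ * ((ascents σ).factorial : R) * ((descents σ).factorial : R) /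
        ((k.factorial : R) * (k : R))) •
      rightBracket (List.ofFn fun i : Fin k => FreeLieAlgebra.of R (σ i))

/-- Lie monomials: the smallest subset of the free Lie algebra containing the
canonical generators and closed under the Lie bracket. -/
inductive IsLieMonomial {R : Type*} [CommRing R] {X : Type*} : FreeLieAlgebra R X → Prop
  | of (x : X) : IsLieMonomial (FreeLieAlgebra.of R x)
  | bracket {a b : FreeLieAlgebra R X} : IsLieMonomial a → IsLieMonomial b →
      IsLieMonomial ⁅a, b⁆

/-- The ℓ¹ Lie norm: infimum of `Σᵢ |cᵢ|` over all finite presentations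
`u = Σᵢ cᵢ • mᵢ` with real coefficients `cᵢ` and Lie monomials `mᵢ`. -/
def lieL1Norm {X : Type*} (u : FreeLieAlgebra ℝ X) : ℝ :=
  sInf { s : ℝ | ∃ (n : ℕ) (c : Fin n → ℝ) (m : Fin n → FreeLieAlgebra ℝ X),
    (∀ i, IsLieMonomial (m i)) ∧ u = ∑ i, c i • m i ∧ s = ∑ i, |c i| }

/-- `Θ_m^Lie := (1/m!) · ‖μ_m^Lie‖_{ℓ¹}`. -/
def ThetaLie (m : ℕ) : ℝ := (1 / (m.factorial : ℝ)) * lieL1Norm (magnusLie ℝ m)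

open Equiv FreeLieAlgebra

theorem descents_eq_sum {n : ℕ} (σ : Perm (Fin (n + 1))) :
    descents σ = ∑ i : Fin n, if σ i.succ < σ i.castSucc then 1 else 0 := by
  rw [descents, Finset.card_filter, Fin.sum_univ_castSucc]
  simp [Fin.succ, Fin.castSucc]

theorem descents_fin_four (σ : Perm (Fin 4)) :
    descents σ = (if σ 1 < σ 0 then 1 else 0) + (if σ 2 < σ 1 then 1 else 0) +
      (if σ 3 < σ 2 then 1 else 0) := by
  rw [descents_eq_sum, Fin.sum_univ_three]
  rfl

theorem sum_perm_fin_succ {M : Type*} [AddCommMonoid M] {n : ℕ} (f : Perm (Fin (n + 1)) → M) :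
    ∑ σ, f σ = ∑ p, ∑ e : Perm (Fin n), f (Perm.decomposeFin.symm (p, e)) := by
  rw [← Perm.decomposeFin.symm.sum_comp, Fintype.sum_prod_type]

theorem rightBracket_ofFn_four {L : Type*} [LieRing L] (f : Fin 4 → L) :
    rightBracket (List.ofFn f) = ⁅f 0, ⁅f 1, ⁅f 2, f 3⁆⁆⁆ := rfl

section MagnusFourTerm

variable (R : Type*) [CommRing R]

local notation "𝔵" i:max => (FreeLieAlgebra.of R i : FreeLieAlgebra R (Fin 4))

def magnusLieFourTerm : Fin 4 → FreeLieAlgebra R (Fin 4) :=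
  ![⁅𝔵 0, ⁅𝔵 1, ⁅𝔵 2, 𝔵 3⁆⁆⁆, ⁅⁅𝔵 0, 𝔵 1⁆, ⁅𝔵 2, 𝔵 3⁆⁆, ⁅⁅𝔵 0, ⁅𝔵 1, 𝔵 2⁆⁆, 𝔵 3⁆,
    ⁅⁅𝔵 0, ⁅𝔵 1, 𝔵 3⁆⁆, 𝔵 2⁆]

theorem isLieMonomial_magnusLieFourTerm (i : Fin 4) : IsLieMonomial (magnusLieFourTerm R i) := by
  fin_cases i <;> repeat' constructor

end MagnusFourTerm

theorem magnusLie_four (R : Type*) [Field R] [CharZero R] :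
    magnusLie R 4 = ∑ i, (1 / 12 : R) • magnusLieFourTerm R i := by
  simp only [magnusLie, ascents, rightBracket_ofFn_four, descents_fin_four]
  simp only [sum_perm_fin_succ, Finset.univ_unique, Finset.sum_singleton,
    show (2 : Fin 4) = Fin.succ 1 from rfl, show (3 : Fin 4) = Fin.succ 2 from rfl,
    show (2 : Fin 3) = Fin.succ 1 from rfl, Perm.decomposeFin_symm_apply_zero,
    Perm.decomposeFin_symm_apply_succ, Perm.decomposeFin_symm_apply_one, Fin.sum_univ_succ]
  simp only [Nat.reduceAdd, Fin.isValue, swap_self, Fin.succ, Nat.zero_mod, zero_add, Fin.mk_one,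
    refl_apply, not_lt_zero, ↓reduceIte, Fin.coe_ofNat_eq_mod, Nat.one_mod, Fin.reduceFinMk,
    Fin.lt_one_iff, Fin.reduceEq, add_zero, Perm.default_eq, Perm.coe_one, id_eq, Nat.mod_succ,
    Fin.reduceLT, pow_zero, Nat.add_one_sub_one, tsub_zero, one_mul, Nat.factorial_zero,
    Nat.cast_one, mul_one, Nat.cast_ofNat, Fin.default_eq_zero, swap_apply_right, pow_one,
    Nat.factorial_two, neg_mul, Nat.factorial_one, swap_apply_def, one_ne_zero, even_two,
    Even.neg_pow, one_pow, Nat.reduceSub, zero_lt_one, tsub_self, one_div, magnusLieFourTerm,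
    Matrix.cons_val_zero, Matrix.cons_val_one, Matrix.cons_val]
  norm_num [Nat.factorial]
  -- Straighten every bracket into the basis `⁅X a, ⁅X b, ⁅X c, X 3⁆⁆⁆` of the multilinear part.
  simp only [← lie_skew (of R (3 : Fin 4)), lie_lie, lie_neg, lie_sub]
  module

section Duality

variable {X : Type*} (φ : FreeLieAlgebra ℝ X →ₗ[ℝ] ℝ) {u : FreeLieAlgebra ℝ X} {n : ℕ}

theorem abs_le_sum_abs_of_eq_sum (hφ : ∀ m, IsLieMonomial m → |φ m| ≤ 1) {c : Fin n → ℝ}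
    {m : Fin n → FreeLieAlgebra ℝ X} (hm : ∀ i, IsLieMonomial (m i)) (hu : u = ∑ i, c i • m i) :
    |φ u| ≤ ∑ i, |c i| :=
  calc |φ u| = |∑ i, c i * φ (m i)| := by simp [hu]
    _ ≤ ∑ i, |c i * φ (m i)| := Finset.abs_sum_le_sum_abs _ _
    _ ≤ ∑ i, |c i| := Finset.sum_le_sum fun i _ => by
        rw [abs_mul]
        exact mul_le_of_le_one_right (abs_nonneg _) (hφ _ (hm i))

theorem lieL1Norm_eq_of_dual (hφ : ∀ m, IsLieMonomial m → |φ m| ≤ 1) (c : Fin n → ℝ)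
    (m : Fin n → FreeLieAlgebra ℝ X) (hm : ∀ i, IsLieMonomial (m i)) (hu : u = ∑ i, c i • m i)
    (hφu : φ u = ∑ i, |c i|) :
    lieL1Norm u = ∑ i, |c i| := by
  refine le_antisymm (csInf_le ⟨0, ?_⟩ ⟨n, c, m, hm, hu, rfl⟩)
    (le_csInf ⟨_, n, c, m, hm, hu, rfl⟩ ?_)
  · rintro _ ⟨n', c', m', -, -, rfl⟩
    positivity
  · rintro _ ⟨n', c', m', hm', hu', rfl⟩
    rw [← hφu]
    exact (le_abs_self _).trans (abs_le_sum_abs_of_eq_sum φ hφ hm' hu')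

end Duality

inductive IsLieMonomialWithContent {R : Type*} [CommRing R] {X : Type*} :
    Multiset X → FreeLieAlgebra R X → Prop
  | generator (x : X) : IsLieMonomialWithContent {x} (of R x)
  | bracket {M N : Multiset X} {a b : FreeLieAlgebra R X} :
      IsLieMonomialWithContent M a → IsLieMonomialWithContent N b →
        IsLieMonomialWithContent (M + N) ⁅a, b⁆

namespace IsLieMonomialWithContent

variable {R : Type*} [CommRing R] {X : Type*} {M : Multiset X} {m : FreeLieAlgebra R X}

theorem _root_.IsLieMonomial.exists_content (h : IsLieMonomial m) :
    ∃ M, IsLieMonomialWithContent M m := by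
  induction h with
  | of x => exact ⟨_, generator x⟩
  | bracket _ _ iha ihb =>
    obtain ⟨M, hM⟩ := iha
    obtain ⟨N, hN⟩ := ihb
    exact ⟨_, bracket hM hN⟩

theorem card_pos (h : IsLieMonomialWithContent M m) : 0 < M.card := by
  induction h with
  | generator x => simp
  | bracket _ _ iha _ => rw [Multiset.card_add]; omega

theorem eq_of_card_eq_one (h : IsLieMonomialWithContent M m) (hM : M.card = 1) :
    ∃ x : X, m = of R x := by
  cases h with
  | generator x => exact ⟨x, rfl⟩
  | bracket ha hb =>
    have := ha.card_pos
    have := hb.card_pos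
    rw [Multiset.card_add] at hM
    omega

theorem eq_of_card_eq_two (h : IsLieMonomialWithContent M m) (hM : M.card = 2) :
    ∃ x y : X, m = ⁅of R x, of R y⁆ := by
  cases h with
  | generator x => simp at hM
  | bracket ha hb =>
    have := ha.card_pos
    have := hb.card_pos
    rw [Multiset.card_add] at hM
    obtain ⟨x, rfl⟩ := ha.eq_of_card_eq_one (by omega)
    obtain ⟨y, rfl⟩ := hb.eq_of_card_eq_one (by omega)
    exact ⟨x, y, rfl⟩

theorem eq_of_card_eq_three (h : IsLieMonomialWithContent M m) (hM : M.card = 3) :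
    ∃ x y z : X, m = ⁅of R x, ⁅of R y, of R z⁆⁆ ∨ m = -⁅of R x, ⁅of R y, of R z⁆⁆ := by
  cases h with
  | generator x => simp at hM
  | @bracket A B _ _ ha hb =>
    have := ha.card_pos
    have := hb.card_pos
    rw [Multiset.card_add] at hM
    obtain h12 | h21 : (A.card = 1 ∧ B.card = 2) ∨ (A.card = 2 ∧ B.card = 1) := by omega
    · obtain ⟨x, rfl⟩ := ha.eq_of_card_eq_one h12.1
      obtain ⟨y, z, rfl⟩ := hb.eq_of_card_eq_two h12.2
      exact ⟨x, y, z, .inl rfl⟩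
    · obtain ⟨x, y, rfl⟩ := ha.eq_of_card_eq_two h21.1
      obtain ⟨z, rfl⟩ := hb.eq_of_card_eq_one h21.2
      exact ⟨z, x, y, .inr (lie_skew _ _).symm⟩

theorem eq_of_card_eq_four (h : IsLieMonomialWithContent M m) (hM : M.card = 4) :
    ∃ x y z w : X,
      m = ⁅of R x, ⁅of R y, ⁅of R z, of R w⁆⁆⁆ ∨ m = -⁅of R x, ⁅of R y, ⁅of R z, of R w⁆⁆⁆ ∨
      m = ⁅⁅of R x, of R y⁆, ⁅of R z, of R w⁆⁆ ∨ m = -⁅⁅of R x, of R y⁆, ⁅of R z, of R w⁆⁆ := by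
  cases h with
  | generator x => simp at hM
  | @bracket A B _ _ ha hb =>
    have := ha.card_pos
    have := hb.card_pos
    rw [Multiset.card_add] at hM
    obtain h13 | h22 | h31 : (A.card = 1 ∧ B.card = 3) ∨ (A.card = 2 ∧ B.card = 2) ∨
        (A.card = 3 ∧ B.card = 1) := by omega
    · obtain ⟨x, rfl⟩ := ha.eq_of_card_eq_one h13.1
      obtain ⟨y, z, w, rfl | rfl⟩ := hb.eq_of_card_eq_three h13.2
      · exact ⟨x, y, z, w, .inl rfl⟩
      · exact ⟨x, y, z, w, .inr (.inl (lie_neg _ _))⟩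
    · obtain ⟨x, y, rfl⟩ := ha.eq_of_card_eq_two h22.1
      obtain ⟨z, w, rfl⟩ := hb.eq_of_card_eq_two h22.2
      exact ⟨x, y, z, w, .inr (.inr (.inl rfl))⟩
    · obtain ⟨w, rfl⟩ := hb.eq_of_card_eq_one h31.2
      obtain ⟨x, y, z, rfl | rfl⟩ := ha.eq_of_card_eq_three h31.1
      · exact ⟨w, x, y, z, .inr (.inl (lie_skew _ _).symm)⟩
      · exact ⟨w, x, y, z, .inl (by rw [neg_lie, lie_skew])⟩

end IsLieMonomialWithContent

section WordAlgebra

open AddMonoidAlgebra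

attribute [local instance] LieRing.ofAssociativeRing

variable (R : Type*) [CommRing R] (X : Type*)

def wordContent : FreeAddMonoid X →+ Multiset X where
  toFun w := (w.toList : Multiset X)
  map_zero' := rfl
  map_add' _ _ := by simp

def toWordAlgebra : FreeLieAlgebra R X →ₗ⁅R⁆ AddMonoidAlgebra R (FreeAddMonoid X) :=
  lift R fun x => single (FreeAddMonoid.of x) 1

def wordPairing (y : List X → R) : AddMonoidAlgebra R (FreeAddMonoid X) →ₗ[R] R :=
  Finsupp.linearCombination R (fun w => y w.toList) ∘ₗ (coeffLinearEquiv R).toLinearMap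

def wordFunctional (y : List X → R) : FreeLieAlgebra R X →ₗ[R] R :=
  wordPairing R X y ∘ₗ (toWordAlgebra R X).toLinearMap

variable {R X}

def nestedSum (y : List X → R) (i j k l : X) : R :=
  y [i, j, k, l] - y [i, j, l, k] - y [i, k, l, j] + y [i, l, k, j]
    - y [j, k, l, i] + y [j, l, k, i] + y [k, l, j, i] - y [l, k, j, i]

def squareSum (y : List X → R) (i j k l : X) : R :=
  y [i, j, k, l] - y [i, j, l, k] - y [j, i, k, l] + y [j, i, l, k]
    - y [k, l, i, j] + y [k, l, j, i] + y [l, k, i, j] - y [l, k, j, i]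

theorem toWordAlgebra_of (x : X) :
    toWordAlgebra R X (of R x) = single (FreeAddMonoid.of x) 1 :=
  lift_of_apply _ _

theorem wordPairing_single (y : List X → R) (w : FreeAddMonoid X) (r : R) :
    wordPairing R X y (single w r) = r * y w.toList := by
  simp [wordPairing]

theorem IsLieMonomialWithContent.toWordAlgebra_mem_gradeBy {M : Multiset X}
    {m : FreeLieAlgebra R X} (h : IsLieMonomialWithContent M m) :
    toWordAlgebra R X m ∈ gradeBy R (wordContent X) M := by
  induction h with
  | generator x =>
    rw [toWordAlgebra_of]
    exact single_mem_gradeBy (wordContent X) (FreeAddMonoid.of x) (1 : R)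
  | @bracket A B a b _ _ ha hb =>
    rw [LieHom.map_lie, Ring.lie_def]
    exact sub_mem (SetLike.mul_mem_graded ha hb) (add_comm A B ▸ SetLike.mul_mem_graded hb ha)

theorem wordPairing_eq_zero_of_mem_gradeBy {y : List X → R} {M₀ M : Multiset X}
    (hy : ∀ w, y w ≠ 0 → (w : Multiset X) = M₀) (hM : M ≠ M₀)
    {a : AddMonoidAlgebra R (FreeAddMonoid X)} (ha : a ∈ gradeBy R (wordContent X) M) :
    wordPairing R X y a = 0 := by
  rw [wordPairing, LinearMap.comp_apply, Finsupp.linearCombination_apply]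
  refine Finset.sum_eq_zero fun w hw => ?_
  have hw : (w.toList : Multiset X) = M := ha w hw
  have hyw : y w.toList = 0 := not_not.mp fun h => hM (hw.symm.trans (hy _ h))
  simp [hyw]

theorem IsLieMonomialWithContent.wordFunctional_eq_zero {y : List X → R} {M₀ M : Multiset X}
    {m : FreeLieAlgebra R X} (h : IsLieMonomialWithContent M m)
    (hy : ∀ w, y w ≠ 0 → (w : Multiset X) = M₀) (hM : M ≠ M₀) : wordFunctional R X y m = 0 :=
  wordPairing_eq_zero_of_mem_gradeBy hy hM h.toWordAlgebra_mem_gradeBy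

theorem wordFunctional_nested (y : List X → R) (i j k l : X) :
    wordFunctional R X y ⁅of R i, ⁅of R j, ⁅of R k, of R l⁆⁆⁆ = nestedSum y i j k l := by
  simp only [wordFunctional, LinearMap.comp_apply, LieHom.coe_toLinearMap, LieHom.map_lie,
    Ring.lie_def, toWordAlgebra_of, mul_sub, sub_mul, single_mul_single, map_sub,
    wordPairing_single, mul_one, FreeAddMonoid.toList_add, FreeAddMonoid.toList_of,
    List.cons_append, List.nil_append, nestedSum]
  ring

theorem wordFunctional_square (y : List X → R) (i j k l : X) :
    wordFunctional R X y ⁅⁅of R i, of R j⁆, ⁅of R k, of R l⁆⁆ = squareSum y i j k l := by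
  simp only [wordFunctional, LinearMap.comp_apply, LieHom.coe_toLinearMap, LieHom.map_lie,
    Ring.lie_def, toWordAlgebra_of, mul_sub, sub_mul, single_mul_single, map_sub,
    wordPairing_single, mul_one, FreeAddMonoid.toList_add, FreeAddMonoid.toList_of,
    List.cons_append, List.nil_append, squareSum]
  ring

theorem intCast_nestedSum (y : List X → ℤ) (i j k l : X) :
    nestedSum (fun w => (y w : R)) i j k l = nestedSum y i j k l := by
  simp [nestedSum]

theorem intCast_squareSum (y : List X → ℤ) (i j k l : X) :
    squareSum (fun w => (y w : R)) i j k l = squareSum y i j k l := by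
  simp [squareSum]

end WordAlgebra

section DualCertificate

def dualCert (w : List (Fin 4)) : ℤ :=
  if w = [0, 1, 2, 3] then 2
  else if w ∈ [[0, 1, 3, 2], [0, 2, 1, 3], [1, 0, 2, 3], [1, 0, 3, 2]] then 1 else 0

theorem coe_eq_of_dualCert_ne_zero {w : List (Fin 4)} (h : dualCert w ≠ 0) :
    (w : Multiset (Fin 4)) = {0, 1, 2, 3} := by
  unfold dualCert at h
  split_ifs at h with h₁ h₂
  · subst h₁; rfl
  · simp only [List.mem_cons, List.not_mem_nil, or_false] at h₂
    rcases h₂ with rfl | rfl | rfl | rfl <;> decide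
  · exact absurd rfl h

theorem abs_nestedSum_dualCert_le (i j k l : Fin 4) : |nestedSum dualCert i j k l| ≤ 1 := by
  revert i j k l; decide

theorem abs_squareSum_dualCert_le (i j k l : Fin 4) : |squareSum dualCert i j k l| ≤ 1 := by
  revert i j k l; decide

def dualFunctional : FreeLieAlgebra ℝ (Fin 4) →ₗ[ℝ] ℝ :=
  wordFunctional ℝ (Fin 4) fun w => dualCert w

theorem abs_dualFunctional_le_one {m : FreeLieAlgebra ℝ (Fin 4)} (hm : IsLieMonomial m) :
    |dualFunctional m| ≤ 1 := by
  obtain ⟨M, hM⟩ := hm.exists_content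
  by_cases hM₀ : M = {0, 1, 2, 3}
  · obtain ⟨i, j, k, l, rfl | rfl | rfl | rfl⟩ := hM.eq_of_card_eq_four (by rw [hM₀]; rfl)
    all_goals
      simp only [dualFunctional, map_neg, abs_neg, wordFunctional_nested, wordFunctional_square,
        intCast_nestedSum, intCast_squareSum]
      first
      | exact_mod_cast abs_nestedSum_dualCert_le i j k l
      | exact_mod_cast abs_squareSum_dualCert_le i j k l
  · rw [dualFunctional,
      hM.wordFunctional_eq_zero (fun w h => coe_eq_of_dualCert_ne_zero (by exact_mod_cast h)) hM₀]
    norm_num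

theorem dualFunctional_magnusLieFourTerm (i : Fin 4) :
    dualFunctional (magnusLieFourTerm ℝ i) = 1 := by
  fin_cases i <;> simp only [magnusLieFourTerm, Fin.reduceFinMk, Matrix.cons_val, dualFunctional]
  · rw [wordFunctional_nested]
    norm_num [nestedSum, dualCert, Fin.ext_iff]
  · rw [wordFunctional_square]
    norm_num [squareSum, dualCert, Fin.ext_iff]
  · rw [← lie_skew, map_neg, wordFunctional_nested]
    norm_num [nestedSum, dualCert, Fin.ext_iff]
  · rw [← lie_skew, map_neg, wordFunctional_nested]
    norm_num [nestedSum, dualCert, Fin.ext_iff]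

end DualCertificate

/-- `‖μ_4^Lie‖_{ℓ¹} = 1/3`; equivalently `Θ_4^Lie = (1/4!)·(1/3)`. -/
theorem lieL1Norm_magnusLie_four :
    lieL1Norm (magnusLie ℝ 4) = 1 / 3 ∧
    ThetaLie 4 = (1 / (Nat.factorial 4 : ℝ)) * (1 / 3) := by
  have hnorm : lieL1Norm (magnusLie ℝ 4) = 1 / 3 := by
    rw [lieL1Norm_eq_of_dual dualFunctional (fun _ => abs_dualFunctional_le_one) (fun _ => 1 / 12)
      (magnusLieFourTerm ℝ) (isLieMonomial_magnusLieFourTerm ℝ) (magnusLie_four ℝ)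
      (by simp [magnusLie_four, dualFunctional_magnusLieFourTerm])]
    norm_num
  exact ⟨hnorm, by rw [ThetaLie, hnorm]⟩
end
end

section
/- Let X = !![0, √2/2; 0, 0] and Y = !![0, 0; √2/2, 0] be 2×2 real matrices. Then for every real t, exp(t • X) * exp(t • Y) = exp( (2 · arsinh(t/(2√2)) / √(8 + t²)) • !![t, 2√2; 2√2, −t] ), where exp denotes the matrix exponential and arsinh the real inverse hyperbolic sine. (This is the closed form of log(exp(tX̂)exp(tŶ)) in 𝔰𝔩₂(ℝ) used to bound the BCH convergence radius.) -/
/-!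
`t X̂` and `t Ŷ` square to zero, so their exponentials are `1 + t X̂` and `1 + t Ŷ`. The matrix
`M = !![t, 2√2; 2√2, -t]` squares to `r² • 1` with `r = √(8 + t²)`, so summing the even and odd
parts of the series, `exp ((θ / r) • M) = cosh θ • 1 + (sinh θ / r) • M`. For `θ = 2 arsinh (t / (2√2))` the
double-angle formulas give `cosh θ = 1 + t² / 4` and `sinh θ / r = t / 4`, and both sides become
`!![1 + t² / 2, t / √2; t / √2, 1]`.
-/

open Matrix NormedSpace
open scoped Nat

section ExpOfQuadratic

variable {𝔸 : Type*} [Ring 𝔸] [TopologicalSpace 𝔸] [IsTopologicalRing 𝔸] [T2Space 𝔸]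

theorem exp_eq_one_add_of_mul_self_eq_zero [Algebra ℚ 𝔸] {a : 𝔸} (h : a * a = 0) :
    exp a = 1 + a := by
  have hvanish : ∀ n ∉ Finset.range 2, ((n ! : ℚ)⁻¹ • a ^ n) = 0 := by
    intro n hn
    obtain ⟨k, rfl⟩ := Nat.exists_eq_add_of_le (not_lt.mp (Finset.mem_range.not.mp hn))
    rw [pow_add, sq, h, zero_mul, smul_zero]
  rw [exp_eq_tsum_rat]
  exact (hasSum_sum_of_ne_finset_zero hvanish).tsum_eq.trans (by simp [Finset.sum_range_succ])

theorem exp_div_smul_of_mul_self_eq_smul_one [Algebra ℝ 𝔸] [ContinuousSMul ℝ 𝔸] {a : 𝔸}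
    {r : ℝ} (hr : r ≠ 0) (h : a * a = (r * r) • (1 : 𝔸)) (θ : ℝ) :
    exp ((θ / r) • a) = Real.cosh θ • (1 : 𝔸) + (Real.sinh θ / r) • a := by
  have heven (n : ℕ) : ((θ / r) • a) ^ (2 * n) = θ ^ (2 * n) • (1 : 𝔸) := by
    rw [pow_mul, sq, smul_mul_smul_comm, h, smul_smul, smul_pow, one_pow, pow_mul, sq θ]
    congr 2
    field_simp
  have hodd (n : ℕ) : ((θ / r) • a) ^ (2 * n + 1) = (θ ^ (2 * n + 1) / r) • a := by
    rw [pow_succ, heven, smul_mul_smul_comm, one_mul, pow_succ, mul_div_assoc]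
  have hcosh : HasSum (fun n ↦ ((2 * n)! : ℝ)⁻¹ • ((θ / r) • a) ^ (2 * n))
      (Real.cosh θ • (1 : 𝔸)) := by
    convert (Real.hasSum_cosh θ).smul_const (1 : 𝔸) using 2 with n
    rw [heven, smul_smul, div_eq_inv_mul]
  have hsinh : HasSum (fun n ↦ ((2 * n + 1)! : ℝ)⁻¹ • ((θ / r) • a) ^ (2 * n + 1))
      ((Real.sinh θ / r) • a) := by
    convert ((Real.hasSum_sinh θ).div_const r).smul_const a using 2 with n
    rw [hodd, smul_smul]
    congr 1
    ring
  rw [exp_eq_tsum ℝ]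
  exact (HasSum.even_add_odd (f := fun n ↦ (n ! : ℝ)⁻¹ • ((θ / r) • a) ^ n) hcosh hsinh).tsum_eq

end ExpOfQuadratic

namespace Real

theorem cosh_two_mul_arsinh (s : ℝ) : cosh (2 * arsinh s) = 1 + 2 * s ^ 2 := by
  rw [cosh_two_mul, cosh_sq, sinh_arsinh]
  ring

theorem sinh_two_mul_arsinh (s : ℝ) : sinh (2 * arsinh s) = 2 * s * √(1 + s ^ 2) := by
  rw [sinh_two_mul, sinh_arsinh, cosh_arsinh]

end Real

theorem sqrt_eight_add_sq (t : ℝ) : √(8 + t ^ 2) = 2 * √2 * √(1 + (t / (2 * √2)) ^ 2) := by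
  have h2 : √2 ^ 2 = 2 := Real.sq_sqrt zero_le_two
  have hfactor : 8 + t ^ 2 = (2 * √2) ^ 2 * (1 + (t / (2 * √2)) ^ 2) := by
    field_simp
    rw [h2]
    norm_num
  rw [hfactor, Real.sqrt_mul (by positivity), Real.sqrt_sq (by positivity)]

theorem sinh_two_mul_arsinh_div_sqrt_eight_add_sq (t : ℝ) :
    Real.sinh (2 * Real.arsinh (t / (2 * √2))) / √(8 + t ^ 2) = t / 4 := by
  have h2 : √2 ^ 2 = 2 := Real.sq_sqrt zero_le_two
  have hpos : 0 < √(1 + (t / (2 * √2)) ^ 2) := Real.sqrt_pos.mpr (by positivity)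
  rw [Real.sinh_two_mul_arsinh, sqrt_eight_add_sq]
  field_simp
  linear_combination (-2 * t) * h2

theorem sl2_element_mul_self (t : ℝ) :
    !![t, 2 * √2; 2 * √2, -t] * !![t, 2 * √2; 2 * √2, -t] =
      (√(8 + t ^ 2) * √(8 + t ^ 2)) • (1 : Matrix (Fin 2) (Fin 2) ℝ) := by
  have h2 : √2 ^ 2 = 2 := Real.sq_sqrt zero_le_two
  rw [Real.mul_self_sqrt (by positivity), mul_fin_two, one_fin_two, smul_of]
  ext i j
  fin_cases i <;> fin_cases j <;> simp <;> grind

/-- Closed form of `exp(tX̂)·exp(tŶ)` in `𝔰𝔩₂(ℝ)`: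
with `X̂ = !![0, √2/2; 0, 0]` and `Ŷ = !![0, 0; √2/2, 0]`,
`exp(tX̂)·exp(tŶ) = exp((2·arsinh(t/(2√2))/√(8+t²)) • !![t, 2√2; 2√2, −t])`. -/
theorem exp_mul_exp_sl2 (t : ℝ) :
    NormedSpace.exp (t • (!![0, Real.sqrt 2 / 2; 0, 0] : Matrix (Fin 2) (Fin 2) ℝ)) *
      NormedSpace.exp (t • (!![0, 0; Real.sqrt 2 / 2, 0] : Matrix (Fin 2) (Fin 2) ℝ)) =
    NormedSpace.exp
      ((2 * Real.arsinh (t / (2 * Real.sqrt 2)) / Real.sqrt (8 + t ^ 2)) •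
        (!![t, 2 * Real.sqrt 2; 2 * Real.sqrt 2, -t] : Matrix (Fin 2) (Fin 2) ℝ)) := by
  have h2 : √2 ^ 2 = 2 := Real.sq_sqrt zero_le_two
  rw [exp_eq_one_add_of_mul_self_eq_zero (by simp [← Matrix.ext_iff, Fin.forall_fin_two]),
    exp_eq_one_add_of_mul_self_eq_zero (by simp [← Matrix.ext_iff, Fin.forall_fin_two]),
    exp_div_smul_of_mul_self_eq_smul_one (by positivity) (sl2_element_mul_self t),
    Real.cosh_two_mul_arsinh, sinh_two_mul_arsinh_div_sqrt_eight_add_sq]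
  ext i j
  fin_cases i <;> fin_cases j <;> simp [one_fin_two] <;> grind
end
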